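/- Let H ⊆ ℝ be a bounded, countably infinite set and let x ∈ ℝ be such that both H^{-x} = H ∩ (−∞, x] and H^{+x} = H ∩ [x, +∞) are infinite. Then x ∈ MS^axs(H) if and only if there exist x₁ ∈ [liminf H^{-x}, limsup H^{-x}] and x₂ ∈ [liminf H^{+x}, limsup H^{+x}] such that x = (x₁ + x₂)/2. -/

import Mathlib

/-!
Write `K⁻ = K ∩ (-∞, x]` and `K⁺ = K ∩ [x, ∞)`. If a finite set `s` has `k` points on each side
of `x`, then `k ((A(s⁻) - x) + (A(s⁺) - x)) = |s| (A(s) - x)` (the point `x` itself contributes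
nothing) and `k ≤ |s| ≤ 2k`; so along an `x`-symmetric sequence `A(Hₙ) → x` iff
`A(Hₙ⁻) + A(Hₙ⁺) → 2x`.

Necessity: a bounded set has only finitely many points beyond `limsup + ε` or below
`liminf - ε`, and they shift the mean of a large finite subset by `O(1 / card)`; hence every
subsequential limit of `A(Hₙ⁻)` and of `A(Hₙ⁺)` lies between the liminf and the limsup.

Sufficiency: for `t` between the liminf and the limsup of a countable `S`, build an approximating
sequence one point at a time. At step `(m + 1)² - 1` add the `m`-th point of an enumeration of
`S` if it is still missing; otherwise add a new point on the side of `t` opposite to the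
current excess `∑ (z - t)`, up to an error `2⁻ⁿ` (such points accumulate at the extreme
accumulation points). The excess then stays bounded except for `O(1)` jumps at the `√n`
enumeration steps, so it is `O(√n)` and the mean tends to `t`. The union of such sequences for
`H⁻` and `H⁺`, both started at `x` when `x ∈ H`, is `x`-symmetric.
-/

open Filter Topology

/-- The set of accumulation points of `H`. -/
def accPts (H : Set ℝ) : Set ℝ := {x | AccPt x (𝓟 H)}

/-- Arithmetic mean of a finite set of reals. -/
noncomputable def finsetMean (F : Finset ℝ) : ℝ := (∑ x ∈ F, x) / F.card

/-- `MS^axs(H)`: the set of `x` that are limits of means of `x`-symmetric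
approximating sequences for `H`. -/
def MSaxs (H : Set ℝ) : Set ℝ :=
  {x | ∃ Hn : ℕ → Finset ℝ,
    (∀ n, Hn n ⊆ Hn (n + 1)) ∧ (⋃ n, (Hn n : Set ℝ)) = H ∧
    (∀ n, ((Hn n).filter (fun z => z ≤ x)).card = ((Hn n).filter (fun z => x ≤ z)).card) ∧
    Tendsto (fun n => finsetMean (Hn n)) atTop (𝓝 x)}

section Mean

open Finset

lemma card_mul_finsetMean (F : Finset ℝ) : (#F : ℝ) * finsetMean F = ∑ z ∈ F, z := by
  rcases F.eq_empty_or_nonempty with rfl | hF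
  · simp [finsetMean]
  · exact mul_div_cancel₀ _ (by exact_mod_cast hF.card_ne_zero)

lemma card_mul_finsetMean_sub (F : Finset ℝ) (c : ℝ) :
    (#F : ℝ) * (finsetMean F - c) = ∑ z ∈ F, (z - c) := by
  rw [mul_sub, card_mul_finsetMean, sum_sub_distrib, sum_const, nsmul_eq_mul]

lemma card_mul_sub_finsetMean (F : Finset ℝ) (c : ℝ) :
    (#F : ℝ) * (c - finsetMean F) = ∑ z ∈ F, (c - z) := by
  rw [mul_sub, card_mul_finsetMean, sum_sub_distrib, sum_const, nsmul_eq_mul]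

lemma finsetMean_mem_Icc {F : Finset ℝ} {a b : ℝ} (hF : F.Nonempty) (h : ↑F ⊆ Set.Icc a b) :
    finsetMean F ∈ Set.Icc a b := by
  have hpos : (0 : ℝ) < #F := by exact_mod_cast hF.card_pos
  have hsum := card_mul_finsetMean F
  have hlo := card_nsmul_le_sum F id a fun z hz => (h hz).1
  have hhi := sum_le_card_nsmul F id b fun z hz => (h hz).2
  simp only [nsmul_eq_mul, id] at hlo hhi
  constructor <;> nlinarith

end Mean

section AccPts

variable {S : Set ℝ}

lemma Bornology.IsBounded.accPts (hS : Bornology.IsBounded S) : Bornology.IsBounded (accPts S) :=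
  hS.closure.subset (derivedSet_subset_closure S)

lemma accPts_nonempty (hS : Bornology.IsBounded S) (hi : S.Infinite) : (accPts S).Nonempty :=
  let ⟨z, _, hz⟩ := hi.exists_accPt_of_subset_isCompact hS.isCompact_closure subset_closure
  ⟨z, hz⟩

lemma sSup_accPts_mem (hS : Bornology.IsBounded S) (hi : S.Infinite) :
    sSup (accPts S) ∈ accPts S :=
  (isClosed_derivedSet S).csSup_mem (accPts_nonempty hS hi) hS.accPts.bddAbove

lemma sInf_accPts_mem (hS : Bornology.IsBounded S) (hi : S.Infinite) :
    sInf (accPts S) ∈ accPts S :=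
  (isClosed_derivedSet S).csInf_mem (accPts_nonempty hS hi) hS.accPts.bddBelow

lemma finite_inter_of_disjoint_accPts {U : Set ℝ} (hS : Bornology.IsBounded S) (hU : IsClosed U)
    (hdisj : Disjoint (accPts S) U) : (S ∩ U).Finite := by
  by_contra hinf
  obtain ⟨z, -, hz⟩ := Set.Infinite.exists_accPt_of_subset_isCompact hinf
    (hS.subset Set.inter_subset_left).isCompact_closure subset_closure
  have hzU : z ∈ U := closure_minimal Set.inter_subset_right hU (derivedSet_subset_closure _ hz)
  exact Set.disjoint_left.1 hdisj (derivedSet_mono _ _ Set.inter_subset_left hz) hzU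

lemma infinite_inter_Ici_sub (hS : Bornology.IsBounded S) (hi : S.Infinite) {t ε : ℝ}
    (ht : t ≤ sSup (accPts S)) (hε : 0 < ε) : (S ∩ Set.Ici (t - ε)).Infinite := by
  have hacc := (sSup_accPts_mem hS hi).nhds_inter (Ioi_mem_nhds (by linarith : t - ε < _))
  rw [Set.inter_comm] at hacc
  exact (Set.Infinite.of_accPt hacc).mono (Set.inter_subset_inter_right S Set.Ioi_subset_Ici_self)

lemma infinite_inter_Iic_add (hS : Bornology.IsBounded S) (hi : S.Infinite) {t ε : ℝ}
    (ht : sInf (accPts S) ≤ t) (hε : 0 < ε) : (S ∩ Set.Iic (t + ε)).Infinite := by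
  have hacc := (sInf_accPts_mem hS hi).nhds_inter (Iio_mem_nhds (by linarith : _ < t + ε))
  rw [Set.inter_comm] at hacc
  exact (Set.Infinite.of_accPt hacc).mono (Set.inter_subset_inter_right S Set.Iio_subset_Iic_self)

end AccPts

lemma exists_sum_le_of_finite {S : Set ℝ} {f : ℝ → ℝ} (hfin : (S ∩ {z | 0 < f z}).Finite) :
    ∃ K, ∀ F : Finset ℝ, ↑F ⊆ S → ∑ z ∈ F, f z ≤ K := by
  classical
  refine ⟨∑ z ∈ hfin.toFinset, f z, fun F hF => ?_⟩
  calc ∑ z ∈ F, f z ≤ ∑ z ∈ F.filter (0 < f ·), f z := by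
        rw [← Finset.sum_filter_add_sum_filter_not F (0 < f ·)]
        exact add_le_of_nonpos_right
          (Finset.sum_nonpos fun z hz => not_lt.1 (Finset.mem_filter.1 hz).2)
    _ ≤ ∑ z ∈ hfin.toFinset, f z := by
        refine Finset.sum_le_sum_of_subset_of_nonneg (fun z hz => ?_) fun z hz _ => ?_
        · rw [Finset.mem_filter] at hz
          exact hfin.mem_toFinset.2 ⟨hF hz.1, hz.2⟩
        · exact (hfin.mem_toFinset.1 hz).2.le

lemma nonpos_of_tendsto_of_mul_le {ι : Type*} {l : Filter ι} [l.NeBot] {u g : ι → ℝ} {a K : ℝ}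
    (hu : Tendsto u l atTop) (hg : Tendsto g l (𝓝 a)) (hK : ∀ i, u i * g i ≤ K) : a ≤ 0 := by
  by_contra! ha
  obtain ⟨i, hi⟩ := ((hu.atTop_mul_pos ha hg).eventually_gt_atTop K).exists
  exact (hK i).not_gt hi

lemma mem_Icc_of_tendsto_finsetMean {ι : Type*} {l : Filter ι} [l.NeBot] {S : Set ℝ}
    (hS : Bornology.IsBounded S) {F : ι → Finset ℝ} (hFS : ∀ i, ↑(F i) ⊆ S)
    (hcard : Tendsto (fun i => (F i).card) l atTop) {y : ℝ}
    (hy : Tendsto (fun i => finsetMean (F i)) l (𝓝 y)) :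
    y ∈ Set.Icc (sInf (accPts S)) (sSup (accPts S)) := by
  have hcard' := (tendsto_natCast_atTop_atTop (R := ℝ)).comp hcard
  constructor
  · refine le_of_forall_lt_imp_le_of_dense fun c hc => ?_
    have hfin := finite_inter_of_disjoint_accPts hS isClosed_Iic <|
      Set.disjoint_left.2 fun z hz hzc => (csInf_le hS.accPts.bddBelow hz).not_gt
        (lt_of_le_of_lt (Set.mem_Iic.1 hzc) hc)
    obtain ⟨K, hK⟩ := exists_sum_le_of_finite (f := (c - ·)) <|
      hfin.subset (Set.inter_subset_inter_right S fun z (hz : 0 < c - z) => show z ≤ c by linarith)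
    have := nonpos_of_tendsto_of_mul_le hcard' (tendsto_const_nhds.sub hy) fun i => by
      simpa [card_mul_sub_finsetMean] using hK (F i) (hFS i)
    linarith
  · refine le_of_forall_gt_imp_ge_of_dense fun c hc => ?_
    have hfin := finite_inter_of_disjoint_accPts hS isClosed_Ici <|
      Set.disjoint_left.2 fun z hz hzc => (le_csSup hS.accPts.bddAbove hz).not_gt
        (lt_of_lt_of_le hc (Set.mem_Ici.1 hzc))
    obtain ⟨K, hK⟩ := exists_sum_le_of_finite (f := (· - c)) <|
      hfin.subset (Set.inter_subset_inter_right S fun z (hz : 0 < z - c) => show c ≤ z by linarith)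
    have := nonpos_of_tendsto_of_mul_le hcard' (hy.sub tendsto_const_nhds) fun i => by
      simpa [card_mul_finsetMean_sub] using hK (F i) (hFS i)
    linarith

section Symmetric

open Finset

lemma sum_filter_le_add_sum_filter_ge (s : Finset ℝ) (x : ℝ) :
    ∑ z ∈ s.filter (· ≤ x), (z - x) + ∑ z ∈ s.filter (x ≤ ·), (z - x) = ∑ z ∈ s, (z - x) := by
  rw [sum_filter, sum_filter, ← sum_add_distrib]
  refine sum_congr rfl fun z _ => ?_
  split_ifs <;> linarith

lemma card_le_card_filter_le_add_card_filter_ge (s : Finset ℝ) (x : ℝ) :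
    #s ≤ #(s.filter (· ≤ x)) + #(s.filter (x ≤ ·)) := by
  calc #s = #(s.filter (· ≤ x) ∪ s.filter (x ≤ ·)) := by
        rw [filter_union_right, filter_true_of_mem fun z _ => le_total z x]
    _ ≤ _ := card_union_le _ _

lemma abs_finsetMean_sub_bounds {s : Finset ℝ} {x : ℝ}
    (hs : #(s.filter (· ≤ x)) = #(s.filter (x ≤ ·))) :
    |finsetMean s - x| ≤ |finsetMean (s.filter (· ≤ x)) + finsetMean (s.filter (x ≤ ·)) - 2 * x| ∧
      |finsetMean (s.filter (· ≤ x)) + finsetMean (s.filter (x ≤ ·)) - 2 * x| ≤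
        2 * |finsetMean s - x| := by
  rcases s.eq_empty_or_nonempty with rfl | hne
  · simp only [filter_empty, finsetMean, sum_empty, zero_div, zero_add, zero_sub, abs_neg]
    rw [abs_mul, abs_two]
    constructor <;> linarith [abs_nonneg x]
  have hsplit := sum_filter_le_add_sum_filter_ge s x
  rw [← card_mul_finsetMean_sub, ← card_mul_finsetMean_sub, ← card_mul_finsetMean_sub, ← hs]
    at hsplit
  have hsk := card_le_card_filter_le_add_card_filter_ge s x
  rw [← hs] at hsk
  set k := #(s.filter (· ≤ x))
  set a := finsetMean (s.filter (· ≤ x))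
  set b := finsetMean (s.filter (x ≤ ·))
  have hks : (k : ℝ) ≤ #s := by exact_mod_cast card_filter_le _ _
  have hsk' : (#s : ℝ) ≤ 2 * k := by exact_mod_cast (two_mul k).symm ▸ hsk
  have hspos : (0 : ℝ) < #s := by exact_mod_cast hne.card_pos
  have hkpos : (0 : ℝ) < k := by linarith
  have key : (k : ℝ) * |a + b - 2 * x| = #s * |finsetMean s - x| := by
    rw [show a + b - 2 * x = (a - x) + (b - x) by ring, ← abs_of_pos hkpos, ← abs_mul, mul_add,
      hsplit, abs_mul, abs_of_pos hspos]
  constructor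
  · nlinarith [abs_nonneg (finsetMean s - x)]
  · nlinarith [abs_nonneg (finsetMean s - x)]

lemma tendsto_finsetMean_iff {ι : Type*} {l : Filter ι} {s : ι → Finset ℝ} {x : ℝ}
    (hs : ∀ i, #((s i).filter (· ≤ x)) = #((s i).filter (x ≤ ·))) :
    Tendsto (fun i => finsetMean (s i)) l (𝓝 x) ↔
      Tendsto (fun i => finsetMean ((s i).filter (· ≤ x)) + finsetMean ((s i).filter (x ≤ ·)))
        l (𝓝 (2 * x)) := by
  constructor <;> intro h <;> rw [tendsto_iff_norm_sub_tendsto_zero] at h ⊢ <;>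
    simp only [Real.norm_eq_abs] at h ⊢
  · exact squeeze_zero (fun _ => abs_nonneg _) (fun i => (abs_finsetMean_sub_bounds (hs i)).2)
      (by simpa using h.const_mul 2)
  · exact squeeze_zero (fun _ => abs_nonneg _) (fun i => (abs_finsetMean_sub_bounds (hs i)).1) h

lemma filter_le_union_eq {s t : Finset ℝ} {x : ℝ} (hs : ∀ z ∈ s, z ≤ x) (ht : ∀ z ∈ t, x ≤ z)
    (hx : x ∈ t → x ∈ s) : (s ∪ t).filter (· ≤ x) = s := by
  ext z
  simp only [mem_filter, mem_union]
  refine ⟨?_, fun hz => ⟨Or.inl hz, hs z hz⟩⟩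
  rintro ⟨hz | hz, hzx⟩
  · exact hz
  · obtain rfl := le_antisymm hzx (ht z hz)
    exact hx hz

lemma filter_ge_union_eq {s t : Finset ℝ} {x : ℝ} (hs : ∀ z ∈ s, z ≤ x) (ht : ∀ z ∈ t, x ≤ z)
    (hx : x ∈ s → x ∈ t) : (s ∪ t).filter (x ≤ ·) = t := by
  ext z
  simp only [mem_filter, mem_union]
  refine ⟨?_, fun hz => ⟨Or.inr hz, ht z hz⟩⟩
  rintro ⟨hz | hz, hzx⟩
  · obtain rfl := le_antisymm (hs z hz) hzx
    exact hx hz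
  · exact hz

end Symmetric

lemma tendsto_card_atTop_of_monotone {α : Type*} {F : ℕ → Finset α} (hF : Monotone F)
    (hinf : (⋃ n, (F n : Set α)).Infinite) : Tendsto (fun n => (F n).card) atTop atTop := by
  refine tendsto_atTop_atTop.2 fun b => ?_
  obtain ⟨T, hT, rfl⟩ := hinf.exists_subset_card_eq b
  obtain ⟨N, hN⟩ := (hF.directed_le.mono_comp _ fun _ _ h => Finset.coe_subset.2 h)
    |>.exists_mem_subset_of_finset_subset_biUnion hT
  exact ⟨N, fun n hn => Finset.card_le_card ((Finset.coe_subset.1 hN).trans (hF hn))⟩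

theorem exists_eq_add_div_two_of_mem_MSaxs {H : Set ℝ} (hbd : Bornology.IsBounded H) {x : ℝ}
    (hminf : (H ∩ Set.Iic x).Infinite) (hx : x ∈ MSaxs H) :
    ∃ x₁ ∈ Set.Icc (sInf (accPts (H ∩ Set.Iic x))) (sSup (accPts (H ∩ Set.Iic x))),
      ∃ x₂ ∈ Set.Icc (sInf (accPts (H ∩ Set.Ici x))) (sSup (accPts (H ∩ Set.Ici x))),
        x = (x₁ + x₂) / 2 := by
  obtain ⟨Hn, hmono, hunion, hsymm, hmean⟩ := hx
  set L := fun n => (Hn n).filter (· ≤ x)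
  set R := fun n => (Hn n).filter (x ≤ ·)
  have hL : Tendsto (fun n => (L n).card) atTop atTop :=
    tendsto_card_atTop_of_monotone (fun m n h => Finset.monotone_filter_left _
      (monotone_nat_of_le_succ hmono h)) (by convert hminf; ext z; simp [L, ← hunion])
  have hR : Tendsto (fun n => (R n).card) atTop atTop := by
    simpa only [R, L, ← hsymm] using hL
  have hLR := (tendsto_finsetMean_iff hsymm).1 hmean
  have hHn : ∀ n, ↑(Hn n) ⊆ H := fun n => hunion ▸ Set.subset_iUnion (fun n => (Hn n : Set ℝ)) n
  have hLsub : ∀ n, ↑(L n) ⊆ H ∩ Set.Iic x := fun n z hz => by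
    simp only [L, Finset.coe_filter] at hz; exact ⟨hHn n hz.1, hz.2⟩
  have hRsub : ∀ n, ↑(R n) ⊆ H ∩ Set.Ici x := fun n z hz => by
    simp only [R, Finset.coe_filter] at hz; exact ⟨hHn n hz.1, hz.2⟩
  have hLbdd : ∃ᶠ n in atTop, finsetMean (L n) ∈ Set.Icc (sInf H) (sSup H) :=
    ((hL.eventually_ge_atTop 1).mono fun n hn => finsetMean_mem_Icc (Finset.card_pos.1 hn)
      ((hLsub n).trans (Set.inter_subset_left.trans hbd.subset_Icc_sInf_sSup))).frequently
  obtain ⟨x₁, -, φ, hφ, hx₁⟩ :=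
    tendsto_subseq_of_frequently_bounded (Metric.isBounded_Icc (sInf H) (sSup H)) hLbdd
  have hx₂ : Tendsto (fun n => finsetMean (R (φ n))) atTop (𝓝 (2 * x - x₁)) := by
    simpa [L, R] using (hLR.comp hφ.tendsto_atTop).sub hx₁
  refine ⟨x₁, ?_, 2 * x - x₁, ?_, by ring⟩
  · exact mem_Icc_of_tendsto_finsetMean (hbd.subset Set.inter_subset_left) (fun n => hLsub (φ n))
      (hL.comp hφ.tendsto_atTop) hx₁
  · exact mem_Icc_of_tendsto_finsetMean (hbd.subset Set.inter_subset_left) (fun n => hRsub (φ n))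
      (hR.comp hφ.tendsto_atTop) hx₂

section InsertSeq

variable {α : Type*} [DecidableEq α]

def insertSeq (next : ℕ → Finset α → α) (s : Finset α) : ℕ → Finset α
  | 0 => s
  | n + 1 => insert (next n (insertSeq next s n)) (insertSeq next s n)

variable (next : ℕ → Finset α → α) (s : Finset α)

lemma monotone_insertSeq : Monotone (insertSeq next s) :=
  monotone_nat_of_le_succ fun _ => Finset.subset_insert _ _

lemma card_insertSeq (h : ∀ n G, next n G ∉ G) (n : ℕ) :
    (insertSeq next s n).card = s.card + n := by
  induction n with
  | zero => rfl
  | succ n ih => rw [insertSeq, Finset.card_insert_of_notMem (h _ _), ih, add_assoc]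

lemma coe_insertSeq_subset {S : Set α} (hs : ↑s ⊆ S) (h : ∀ n G, next n G ∈ S) (n : ℕ) :
    ↑(insertSeq next s n) ⊆ S := by
  induction n with
  | zero => exact hs
  | succ n ih => rw [insertSeq, Finset.coe_insert]; exact Set.insert_subset (h _ _) ih

lemma range_subset_iUnion_insertSeq {e : ℕ → α}
    (h : ∀ m G, e m ∉ G → next (m * m + 2 * m) G = e m) :
    Set.range e ⊆ ⋃ n, ↑(insertSeq next s n) := by
  rintro _ ⟨m, rfl⟩
  refine Set.mem_iUnion.2 ⟨m * m + 2 * m + 1, ?_⟩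
  by_cases hm : e m ∈ insertSeq next s (m * m + 2 * m)
  · exact monotone_insertSeq next s (Nat.le_succ _) hm
  · rw [insertSeq, h m _ hm]
    exact Finset.mem_insert_self _ _

end InsertSeq

lemma abs_add_le_max_add {d q C ε : ℝ} (hε : 0 ≤ ε) (hq : |q| ≤ C) (hneg : d ≤ 0 → -ε ≤ q)
    (hpos : 0 < d → q ≤ ε) : |d + q| ≤ max C |d| + ε := by
  have := le_max_left C |d|
  have := le_max_right C |d|
  rw [abs_le] at hq ⊢
  rcases le_or_gt d 0 with hd | hd
  · have := hneg hd
    constructor <;> linarith [neg_abs_le d]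
  · have := hpos hd
    constructor <;> linarith [le_abs_self d]

lemma abs_le_max_add_sum {d δ : ℕ → ℝ} {C : ℝ} (hδ : ∀ n, 0 ≤ δ n)
    (h : ∀ n, |d (n + 1)| ≤ max C |d n| + δ n) (n : ℕ) :
    |d n| ≤ max C |d 0| + ∑ k ∈ Finset.range n, δ k := by
  induction n with
  | zero => simp
  | succ n ih =>
    have hsum : 0 ≤ ∑ k ∈ Finset.range n, δ k := Finset.sum_nonneg fun k _ => hδ k
    rw [Finset.sum_range_succ]
    calc |d (n + 1)| ≤ max C |d n| + δ n := h n
      _ ≤ max C (max C |d 0| + ∑ k ∈ Finset.range n, δ k) + δ n := by gcongr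
      _ = _ := by rw [max_eq_right (le_add_of_le_of_nonneg (le_max_left _ _) hsum), add_assoc]

lemma natSqrt_add_one_le (n : ℕ) : (Nat.sqrt n : ℝ) + 1 ≤ 2 * √((n : ℝ) + 1) := by
  have h1 : (Nat.sqrt n : ℝ) ≤ √((n : ℝ) + 1) :=
    Real.nat_sqrt_le_real_sqrt.trans (Real.sqrt_le_sqrt (by linarith))
  have h2 : 1 ≤ √((n : ℝ) + 1) := Real.one_le_sqrt.2 (by linarith [n.cast_nonneg (α := ℝ)])
  linarith

lemma tendsto_finsetMean_of_abs_sum_sub_le {F : ℕ → Finset ℝ} {t K : ℝ}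
    (hcard : ∀ n, (F n).card = n + 1) (h : ∀ n, |∑ z ∈ F n, (z - t)| ≤ K * (Nat.sqrt n + 1)) :
    Tendsto (fun n => finsetMean (F n)) atTop (𝓝 t) := by
  have hK : 0 ≤ K := by simpa using (abs_nonneg _).trans (h 0)
  have hlim : Tendsto (fun n : ℕ => 2 * K / √((n : ℝ) + 1)) atTop (𝓝 0) :=
    tendsto_const_nhds.div_atTop
      (Real.tendsto_sqrt_atTop.comp (tendsto_natCast_atTop_atTop.atTop_add tendsto_const_nhds))
  rw [tendsto_iff_norm_sub_tendsto_zero]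
  refine squeeze_zero (fun _ => norm_nonneg _) (fun n => ?_) hlim
  have hpos : 0 < √((n : ℝ) + 1) := Real.sqrt_pos.2 (by positivity)
  have hsq : √((n : ℝ) + 1) * √((n : ℝ) + 1) = n + 1 := Real.mul_self_sqrt (by positivity)
  have hmean := card_mul_finsetMean_sub (F n) t
  rw [hcard] at hmean
  push_cast at hmean
  have : ((n : ℝ) + 1) * |finsetMean (F n) - t| ≤ K * (2 * √((n : ℝ) + 1)) :=
    calc ((n : ℝ) + 1) * |finsetMean (F n) - t| = |∑ z ∈ F n, (z - t)| := by
          rw [← hmean, abs_mul, abs_of_pos (by positivity : (0 : ℝ) < n + 1)]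
      _ ≤ K * (Nat.sqrt n + 1) := h n
      _ ≤ K * (2 * √((n : ℝ) + 1)) := mul_le_mul_of_nonneg_left (natSqrt_add_one_le n) hK
  rw [Real.norm_eq_abs, le_div_iff₀ hpos]
  nlinarith

lemma exists_balancing_step {S : Set ℝ} (hS : Bornology.IsBounded S) (hi : S.Infinite) {t C : ℝ}
    (ht : t ∈ Set.Icc (sInf (accPts S)) (sSup (accPts S))) (hC : ∀ y ∈ S, |y - t| ≤ C)
    (e : ℕ → ℝ) (he : ∀ m, e m ∈ S) :
    ∃ next : ℕ → Finset ℝ → ℝ, (∀ n G, next n G ∈ S) ∧ (∀ n G, next n G ∉ G) ∧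
      (∀ m G, e m ∉ G → next (m * m + 2 * m) G = e m) ∧
      ∀ n G, |∑ z ∈ G, (z - t) + (next n G - t)| ≤
        max C |∑ z ∈ G, (z - t)| + (C * ((Nat.sqrt (n + 1) : ℝ) - Nat.sqrt n) + (1 / 2) ^ n) := by
  classical
  have hC0 : 0 ≤ C := (abs_nonneg _).trans (hC _ (he 0))
  have up (n : ℕ) (G : Finset ℝ) : ∃ y ∈ S, y ∉ G ∧ t - (1 / 2) ^ n ≤ y :=
    let ⟨y, ⟨hyS, hy⟩, hyG⟩ :=
      ((infinite_inter_Ici_sub hS hi ht.2 (by positivity)).sdiff G.finite_toSet).nonempty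
    ⟨y, hyS, hyG, hy⟩
  have down (n : ℕ) (G : Finset ℝ) : ∃ y ∈ S, y ∉ G ∧ y ≤ t + (1 / 2) ^ n :=
    let ⟨y, ⟨hyS, hy⟩, hyG⟩ :=
      ((infinite_inter_Iic_add hS hi ht.1 (by positivity)).sdiff G.finite_toSet).nonempty
    ⟨y, hyS, hyG, hy⟩
  choose yUp hyUpS hyUpG hyUp using up
  choose yDown hyDownS hyDownG hyDown using down
  refine ⟨fun n G => if Nat.sqrt n < Nat.sqrt (n + 1) ∧ e (Nat.sqrt n) ∉ G then e (Nat.sqrt n)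
    else if ∑ z ∈ G, (z - t) ≤ 0 then yUp n G else yDown n G, ?_, ?_, ?_, ?_⟩
  · intro n G
    dsimp only
    split_ifs
    · exact he _
    · exact hyUpS n G
    · exact hyDownS n G
  · intro n G
    dsimp only
    split_ifs with hforced
    · exact hforced.2
    · exact hyUpG n G
    · exact hyDownG n G
  · intro m G hm
    have h₁ : Nat.sqrt (m * m + 2 * m) = m := Nat.sqrt_add_eq m (by omega)
    have h₂ : Nat.sqrt (m * m + 2 * m + 1) = m + 1 := by
      rw [show m * m + 2 * m + 1 = (m + 1) * (m + 1) by ring, Nat.sqrt_eq]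
    simp [h₁, h₂, hm]
  · intro n G
    have hsqrt : (Nat.sqrt n : ℝ) ≤ Nat.sqrt (n + 1) := by exact_mod_cast Nat.sqrt_le_sqrt n.le_succ
    have hε : (0 : ℝ) ≤ (1 / 2) ^ n := by positivity
    dsimp only
    split_ifs with hforced hsign
    · have h1 : (1 : ℝ) ≤ Nat.sqrt (n + 1) - Nat.sqrt n := by
        have : Nat.sqrt n + 1 ≤ Nat.sqrt (n + 1) := hforced.1
        rw [le_sub_iff_add_le', ← Nat.cast_add_one]; exact_mod_cast this
      have := mul_le_mul_of_nonneg_left h1 hC0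
      linarith [abs_add_le (∑ z ∈ G, (z - t)) (e (Nat.sqrt n) - t), hC _ (he (Nat.sqrt n)),
        le_max_right C |∑ z ∈ G, (z - t)|]
    · have := abs_add_le_max_add hε (hC _ (hyUpS n G)) (fun _ => by linarith [hyUp n G])
        fun h => absurd hsign (not_le.2 h)
      nlinarith
    · have := abs_add_le_max_add hε (hC _ (hyDownS n G)) (fun h => absurd h hsign)
        fun _ => by linarith [hyDown n G]
      nlinarith

theorem exists_approxSeq_tendsto_finsetMean {S : Set ℝ} (hS : Bornology.IsBounded S)
    (hc : S.Countable) (hi : S.Infinite) {t : ℝ}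
    (ht : t ∈ Set.Icc (sInf (accPts S)) (sSup (accPts S))) {s₀ : ℝ} (hs₀ : s₀ ∈ S) :
    ∃ F : ℕ → Finset ℝ, F 0 = {s₀} ∧ Monotone F ∧ (∀ n, (F n).card = n + 1) ∧
      (⋃ n, (F n : Set ℝ)) = S ∧ Tendsto (fun n => finsetMean (F n)) atTop (𝓝 t) := by
  classical
  obtain ⟨e, rfl⟩ := hc.exists_eq_range hi.nonempty
  obtain ⟨C, hC⟩ := hS.subset_closedBall t
  replace hC : ∀ y ∈ Set.range e, |y - t| ≤ C := fun y hy => by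
    simpa [Real.dist_eq] using hC hy
  obtain ⟨next, hnextS, hnextG, hforced, hstep⟩ :=
    exists_balancing_step hS hi ht hC e Set.mem_range_self
  set F := insertSeq next {s₀}
  have hsum : ∀ n, |∑ z ∈ F n, (z - t)| ≤ (C + 2) * (Nat.sqrt n + 1) := by
    intro n
    have hC0 : 0 ≤ C := (abs_nonneg _).trans (hC s₀ hs₀)
    have hδ (k : ℕ) : 0 ≤ C * ((Nat.sqrt (k + 1) : ℝ) - Nat.sqrt k) + (1 / 2) ^ k := by
      have : (Nat.sqrt k : ℝ) ≤ Nat.sqrt (k + 1) := by exact_mod_cast Nat.sqrt_le_sqrt k.le_succ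
      have := mul_nonneg hC0 (sub_nonneg.2 this)
      positivity
    have hrec (k : ℕ) : |∑ z ∈ F (k + 1), (z - t)| ≤ max C |∑ z ∈ F k, (z - t)| +
        (C * ((Nat.sqrt (k + 1) : ℝ) - Nat.sqrt k) + (1 / 2) ^ k) := by
      rw [show F (k + 1) = insert (next k (F k)) (F k) from rfl,
        Finset.sum_insert (hnextG _ _), add_comm]
      exact hstep k (F k)
    have := abs_le_max_add_sum (d := fun n => ∑ z ∈ F n, (z - t)) hδ hrec n
    rw [Finset.sum_add_distrib, ← Finset.mul_sum,
      Finset.sum_range_sub (fun k => (Nat.sqrt k : ℝ))] at this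
    simp only [F, insertSeq, Finset.sum_singleton, Nat.sqrt_zero, Nat.cast_zero, sub_zero] at this
    have := sum_geometric_two_le n
    have := max_le le_rfl (hC s₀ hs₀)
    nlinarith
  refine ⟨F, rfl, monotone_insertSeq _ _, fun n => by simp [F, card_insertSeq _ _ hnextG, add_comm],
    ?_, tendsto_finsetMean_of_abs_sum_sub_le (fun n => ?_) hsum⟩
  · exact (Set.iUnion_subset (coe_insertSeq_subset _ _ (by simpa using hs₀) hnextS)).antisymm
      (range_subset_iUnion_insertSeq _ _ hforced)
  · simp [F, card_insertSeq _ _ hnextG, add_comm]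

theorem mem_MSaxs_of_eq_add_div_two {H : Set ℝ} (hbd : Bornology.IsBounded H) (hc : H.Countable)
    {x : ℝ} (hminf : (H ∩ Set.Iic x).Infinite) (hpinf : (H ∩ Set.Ici x).Infinite) {x₁ x₂ : ℝ}
    (hx₁ : x₁ ∈ Set.Icc (sInf (accPts (H ∩ Set.Iic x))) (sSup (accPts (H ∩ Set.Iic x))))
    (hx₂ : x₂ ∈ Set.Icc (sInf (accPts (H ∩ Set.Ici x))) (sSup (accPts (H ∩ Set.Ici x))))
    (hx : x = (x₁ + x₂) / 2) : x ∈ MSaxs H := by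
  obtain ⟨s₁, hs₁, s₂, hs₂, hbase⟩ :
      ∃ s₁ ∈ H ∩ Set.Iic x, ∃ s₂ ∈ H ∩ Set.Ici x, x ∈ H → s₁ = x ∧ s₂ = x := by
    by_cases hxH : x ∈ H
    · exact ⟨x, ⟨hxH, Set.self_mem_Iic⟩, x, ⟨hxH, Set.self_mem_Ici⟩, fun _ => ⟨rfl, rfl⟩⟩
    · obtain ⟨s₁, hs₁⟩ := hminf.nonempty
      obtain ⟨s₂, hs₂⟩ := hpinf.nonempty
      exact ⟨s₁, hs₁, s₂, hs₂, fun h => absurd h hxH⟩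
  obtain ⟨F, hF0, hFmono, hFcard, hFunion, hF⟩ := exists_approxSeq_tendsto_finsetMean
    (hbd.subset Set.inter_subset_left) (hc.mono Set.inter_subset_left) hminf hx₁ hs₁
  obtain ⟨G, hG0, hGmono, hGcard, hGunion, hG⟩ := exists_approxSeq_tendsto_finsetMean
    (hbd.subset Set.inter_subset_left) (hc.mono Set.inter_subset_left) hpinf hx₂ hs₂
  have hFsub n : ↑(F n) ⊆ H ∩ Set.Iic x := hFunion ▸ Set.subset_iUnion (fun n => (F n : Set ℝ)) n
  have hGsub n : ↑(G n) ⊆ H ∩ Set.Ici x := hGunion ▸ Set.subset_iUnion (fun n => (G n : Set ℝ)) n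
  have hFx n (h : x ∈ G n) : x ∈ F n :=
    hFmono n.zero_le (by rw [hF0, (hbase (hGsub n h).1).1]; exact Finset.mem_singleton_self x)
  have hGx n (h : x ∈ F n) : x ∈ G n :=
    hGmono n.zero_le (by rw [hG0, (hbase (hFsub n h).1).2]; exact Finset.mem_singleton_self x)
  have hL n : (F n ∪ G n).filter (· ≤ x) = F n :=
    filter_le_union_eq (fun z hz => (hFsub n hz).2) (fun z hz => (hGsub n hz).2) (hFx n)
  have hR n : (F n ∪ G n).filter (x ≤ ·) = G n :=
    filter_ge_union_eq (fun z hz => (hFsub n hz).2) (fun z hz => (hGsub n hz).2) (hGx n)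
  have hsymm n : ((F n ∪ G n).filter (· ≤ x)).card = ((F n ∪ G n).filter (x ≤ ·)).card := by
    rw [hL, hR, hFcard, hGcard]
  refine ⟨fun n => F n ∪ G n, fun n => Finset.union_subset_union (hFmono n.le_succ)
    (hGmono n.le_succ), ?_, hsymm, ?_⟩
  · simp only [Finset.coe_union, Set.iUnion_union_distrib, hFunion, hGunion,
      ← Set.inter_union_distrib_left, Set.Iic_union_Ici, Set.inter_univ]
  · rw [tendsto_finsetMean_iff hsymm]
    simp only [hL, hR]
    convert hF.add hG using 2
    linarith

theorem mem_msaxs_iff_general (H : Set ℝ) (hbd : Bornology.IsBounded H)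
    (hc : H.Countable) (x : ℝ)
    (hminf : (H ∩ Set.Iic x).Infinite) (hpinf : (H ∩ Set.Ici x).Infinite) :
    x ∈ MSaxs H ↔
      ∃ x₁ ∈ Set.Icc (sInf (accPts (H ∩ Set.Iic x))) (sSup (accPts (H ∩ Set.Iic x))),
        ∃ x₂ ∈ Set.Icc (sInf (accPts (H ∩ Set.Ici x))) (sSup (accPts (H ∩ Set.Ici x))),
          x = (x₁ + x₂) / 2 :=
  ⟨exists_eq_add_div_two_of_mem_MSaxs hbd hminf,
    fun ⟨_, hx₁, _, hx₂, hx⟩ => mem_MSaxs_of_eq_add_div_two hbd hc hminf hpinf hx₁ hx₂ hx⟩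

/-- characterization of membership in `MS^axs(H)`. -/
theorem mem_msaxs_iff (H : Set ℝ) (hbd : Bornology.IsBounded H)
    (hc : H.Countable) (hi : H.Infinite) (x : ℝ)
    (hminf : (H ∩ Set.Iic x).Infinite) (hpinf : (H ∩ Set.Ici x).Infinite) :
    x ∈ MSaxs H ↔
      ∃ x₁ ∈ Set.Icc (sInf (accPts (H ∩ Set.Iic x))) (sSup (accPts (H ∩ Set.Iic x))),
        ∃ x₂ ∈ Set.Icc (sInf (accPts (H ∩ Set.Ici x))) (sSup (accPts (H ∩ Set.Ici x))),
          x = (x₁ + x₂) / 2 :=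
  mem_msaxs_iff_general H hbd hc x hminf hpinf
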